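/- arXiv:1512.03421 — 8 statements merged into one kernel-verified Lean document; each statement's English description precedes it below -/
import Mathlib

section
/- Let n and i be natural numbers with i ≤ n, and let φ be a real-valued function on the binary words of length n that is not identically zero and satisfies, for every word x, (n − 2i)·φ(x) = Σ_{y : d_H(x,y) = 1} φ(y) (i.e., φ is an eigenfunction of the n-cube with eigenvalue n − 2i). Then for every binary word x of length n, φ(x + 1^n) = (−1)^i · φ(x), where 1^n denotes the all-one word of length n. -/
/-!
Expand `φ` in the Walsh characters `χ_S(x) = (-1)^(S ⬝ᵥ x)`, whose matrix `W` satisfies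
`W * W = 2ⁿ • 1`. Translating the argument by `v` multiplies the `S`-th Walsh coefficient by
`χ_S(v)`. Since `χ_S(e_j) = ±1` with exactly `|S|` minus signs, the adjacency operator of the cube
multiplies the `S`-th coefficient by `n - 2|S|`, so an eigenfunction for `n - 2i` only has
coefficients on characters of weight `|S| = i`. Translation by `1ⁿ` multiplies each of them by
`χ_S(1ⁿ) = (-1)^|S| = (-1)^i`, and `W` is invertible.
-/

open Finset Matrix

lemma AddChar.map_sum_eq_prod {A M κ : Type*} [AddCommMonoid A] [CommMonoid M]
    (ψ : AddChar A M) (s : Finset κ) (f : κ → A) :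
    ψ (∑ i ∈ s, f i) = ∏ i ∈ s, ψ (f i) := by
  classical
  induction s using Finset.induction_on with
  | empty => simp
  | insert i s hi ih => rw [sum_insert hi, prod_insert hi, AddChar.map_add_eq_mul, ih]

namespace BooleanCube

variable {ι : Type*} [Fintype ι]

def signChar : AddChar (ZMod 2) ℝ := AddChar.zmodChar 2 (by norm_num : (-1 : ℝ) ^ 2 = 1)

lemma signChar_apply (a : ZMod 2) : signChar a = if a = 0 then 1 else -1 := by
  rw [signChar, AddChar.zmodChar_apply]
  obtain rfl | rfl : a = 0 ∨ a = 1 := by decide +revert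
  · simp
  · simp [ZMod.val_one]

def walsh (S : ι → ZMod 2) : AddChar (ι → ZMod 2) ℝ :=
  signChar.compAddMonoidHom (AddMonoidHom.mk' (S ⬝ᵥ ·) (dotProduct_add S))

lemma walsh_apply (S x : ι → ZMod 2) : walsh S x = signChar (S ⬝ᵥ x) := rfl

lemma walsh_comm (S x : ι → ZMod 2) : walsh S x = walsh x S := by
  rw [walsh_apply, walsh_apply, dotProduct_comm]

lemma walsh_add (S T x : ι → ZMod 2) : walsh (S + T) x = walsh S x * walsh T x := by
  rw [walsh_apply, add_dotProduct, AddChar.map_add_eq_mul, walsh_apply, walsh_apply]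

lemma walsh_one (S : ι → ZMod 2) : walsh S 1 = (-1) ^ hammingNorm S := by
  rw [walsh_apply, dotProduct_one, AddChar.map_sum_eq_prod]
  simp only [signChar_apply, prod_ite, prod_const_one, prod_const, one_mul, hammingNorm]

variable [DecidableEq ι]

lemma hammingNorm_eq_one_iff {z : ι → ZMod 2} :
    hammingNorm z = 1 ↔ ∃ j, z = Pi.single j 1 := by
  simp only [hammingNorm, card_eq_one, Finset.ext_iff, mem_filter, mem_univ, true_and,
    mem_singleton]
  refine exists_congr fun j => ⟨fun h => funext fun k => ?_, ?_⟩
  · by_cases hk : k = j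
    · subst hk
      rw [Pi.single_eq_same]
      exact Fin.eq_one_of_ne_zero _ ((h k).2 rfl)
    · simpa [hk] using (h k).not.2 hk
  · rintro rfl k
    by_cases hk : k = j <;> simp [hk]

lemma hammingDist_eq_one_iff {x y : ι → ZMod 2} :
    hammingDist x y = 1 ↔ ∃ j, y = x + Pi.single j 1 := by
  simp only [hammingDist_eq_hammingNorm, hammingNorm_eq_one_iff, neg_add_eq_iff_eq_add]

lemma sum_filter_hammingDist_eq_one {M : Type*} [AddCommMonoid M]
    (f : (ι → ZMod 2) → M) (x : ι → ZMod 2) :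
    ∑ y with hammingDist x y = 1, f y = ∑ j, f (x + Pi.single j 1) := by
  have hnbhd : ({y | hammingDist x y = 1} : Finset _) = univ.image (x + Pi.single · 1) := by
    ext y
    simp only [mem_filter, mem_univ, true_and, mem_image, hammingDist_eq_one_iff]
    exact exists_congr fun j => eq_comm
  have hinj : Function.Injective (x + Pi.single · (1 : ZMod 2)) := fun j k h => by
    simpa [Pi.single_apply, eq_comm] using congrFun (add_left_cancel h) j
  rw [hnbhd, sum_image hinj.injOn]

lemma walsh_single (S : ι → ZMod 2) (j : ι) :
    walsh S (Pi.single j 1) = signChar (S j) := by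
  rw [walsh_apply, dotProduct_single_one]

lemma sum_walsh_single (S : ι → ZMod 2) :
    ∑ j, walsh S (Pi.single j 1) = Fintype.card ι - 2 * hammingNorm S := by
  simp only [walsh_single, signChar_apply, sum_ite, sum_const, hammingNorm, nsmul_eq_mul]
  have hcard := card_filter_add_card_filter_not (s := univ) (fun j => S j = 0)
  rw [card_univ] at hcard
  rw [← hcard]
  push_cast
  ring

lemma walsh_eq_zero_iff {S : ι → ZMod 2} : walsh S = 0 ↔ S = 0 := by
  refine ⟨fun h => ?_, ?_⟩
  · ext j
    have := DFunLike.congr_fun h (Pi.single j 1)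
    rw [walsh_single, AddChar.zero_apply, signChar_apply] at this
    split_ifs at this with hj
    · exact hj
    · norm_num at this
  · rintro rfl
    ext x
    simp [walsh_apply]

lemma sum_walsh (T : ι → ZMod 2) :
    ∑ x, walsh T x = if T = 0 then 2 ^ Fintype.card ι else 0 := by
  split_ifs with hT
  · simp [walsh_eq_zero_iff.2 hT]
  · exact AddChar.sum_eq_zero_iff_ne_zero.2 (walsh_eq_zero_iff.not.2 hT)

def walshMatrix : Matrix (ι → ZMod 2) (ι → ZMod 2) ℝ := of fun S x => walsh S x

lemma walshMatrix_mul_self :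
    walshMatrix * walshMatrix =
      (2 ^ Fintype.card ι : ℝ) • (1 : Matrix (ι → ZMod 2) (ι → ZMod 2) ℝ) := by
  ext S T
  simp only [mul_apply, walshMatrix, of_apply, Matrix.smul_apply, walsh_comm _ T,
    ← walsh_add, sum_walsh, add_eq_zero_iff_eq_neg, ZModModule.neg_eq_self]
  rw [one_apply, smul_eq_mul, mul_ite, mul_one, mul_zero]

lemma walshMatrix_mulVec_injective :
    Function.Injective (walshMatrix (ι := ι) *ᵥ ·) := by
  intro φ ψ h
  have hW := congrArg (walshMatrix *ᵥ ·) h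
  simp only [mulVec_mulVec, walshMatrix_mul_self, smul_mulVec, one_mulVec] at hW
  exact smul_right_injective _ (by positivity) hW

lemma walshMatrix_mulVec_comp_add_right (φ : (ι → ZMod 2) → ℝ) (v S : ι → ZMod 2) :
    (walshMatrix *ᵥ fun x => φ (x + v)) S = walsh S v * (walshMatrix *ᵥ φ) S := by
  simp only [mulVec, dotProduct, walshMatrix, of_apply, mul_sum]
  rw [← Equiv.sum_comp (Equiv.addRight v)]
  refine sum_congr rfl fun x _ => ?_
  rw [Equiv.coe_addRight, add_assoc, ZModModule.add_self, add_zero, AddChar.map_add_eq_mul]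
  ring

def cubeAdj (φ : (ι → ZMod 2) → ℝ) (x : ι → ZMod 2) : ℝ :=
  ∑ j, φ (x + Pi.single j 1)

lemma walshMatrix_mulVec_cubeAdj (φ : (ι → ZMod 2) → ℝ) (S : ι → ZMod 2) :
    (walshMatrix *ᵥ cubeAdj φ) S =
      (Fintype.card ι - 2 * hammingNorm S) * (walshMatrix *ᵥ φ) S := by
  have hsum : cubeAdj φ = ∑ j, (fun x => φ (x + Pi.single j 1) : (ι → ZMod 2) → ℝ) := by
    ext x; simp [cubeAdj]
  rw [hsum, mulVec_sum, Finset.sum_apply, ← sum_walsh_single, sum_mul]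
  simp only [walshMatrix_mulVec_comp_add_right]

lemma hammingNorm_eq_of_cubeAdj_eq_smul {φ : (ι → ZMod 2) → ℝ} {i : ℕ}
    (heig : cubeAdj φ = ((Fintype.card ι : ℝ) - 2 * i) • φ)
    {S : ι → ZMod 2} (hS : (walshMatrix *ᵥ φ) S ≠ 0) : hammingNorm S = i := by
  have h := walshMatrix_mulVec_cubeAdj φ S
  rw [heig, mulVec_smul, Pi.smul_apply, smul_eq_mul] at h
  have heigval := mul_right_cancel₀ hS h
  exact_mod_cast (by linarith : (hammingNorm S : ℝ) = i)

theorem apply_add_one_of_cubeAdj_eq_smul {φ : (ι → ZMod 2) → ℝ} {i : ℕ}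
    (heig : cubeAdj φ = ((Fintype.card ι : ℝ) - 2 * i) • φ) (x : ι → ZMod 2) :
    φ (x + 1) = (-1) ^ i * φ x := by
  have key : walshMatrix *ᵥ (fun x => φ (x + 1)) = walshMatrix *ᵥ ((-1 : ℝ) ^ i • φ) := by
    ext S
    rw [walshMatrix_mulVec_comp_add_right, walsh_one, mulVec_smul, Pi.smul_apply, smul_eq_mul]
    by_cases hS : (walshMatrix *ᵥ φ) S = 0
    · simp [hS]
    · rw [hammingNorm_eq_of_cubeAdj_eq_smul heig hS]
  exact congrFun (walshMatrix_mulVec_injective key) x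

end BooleanCube

theorem stmt_0_general (n i : ℕ) (φ : (Fin n → ZMod 2) → ℝ)
    (heig : ∀ x : Fin n → ZMod 2,
      ((n : ℝ) - 2 * i) * φ x =
        ∑ y ∈ Finset.univ.filter (fun y => hammingDist x y = 1), φ y) :
    ∀ x : Fin n → ZMod 2, φ (x + fun _ => (1 : ZMod 2)) = (-1 : ℝ) ^ i * φ x := by
  refine BooleanCube.apply_add_one_of_cubeAdj_eq_smul (funext fun y => ?_)
  rw [BooleanCube.cubeAdj, Pi.smul_apply, smul_eq_mul, Fintype.card_fin, heig,
    BooleanCube.sum_filter_hammingDist_eq_one]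

/-- An eigenfunction of the `n`-cube with eigenvalue `n - 2i`
satisfies `φ(x + 1^n) = (-1)^i φ(x)`. -/
theorem stmt_0 (n i : ℕ) (hi : i ≤ n) (φ : (Fin n → ZMod 2) → ℝ)
    (hnz : ∃ x, φ x ≠ 0)
    (heig : ∀ x : Fin n → ZMod 2,
      ((n : ℝ) - 2 * i) * φ x =
        ∑ y ∈ Finset.univ.filter (fun y => hammingDist x y = 1), φ y) :
    ∀ x : Fin n → ZMod 2, φ (x + fun _ => (1 : ZMod 2)) = (-1 : ℝ) ^ i * φ x :=
  stmt_0_general n i φ heig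
end

section
/- Let (T_0, T_1) be a 1-perfect trade in the n-cube and let f be the real-valued function on binary words of length n with f(x) = 1 for x ∈ T_0, f(x) = −1 for x ∈ T_1, and f(x) = 0 otherwise. Then f is not identically zero and for every word x, −f(x) = Σ_{y : d_H(x,y) = 1} f(y); that is, f is an eigenfunction of the n-cube with eigenvalue −1. -/
/-- A 1-perfect trade in the n-cube: disjoint nonempty sets such that every
radius-1 ball contains equally many (0 or 1) elements of each. -/
def IsPerfTrade {n : ℕ} (T₀ T₁ : Finset (Fin n → ZMod 2)) : Prop :=
  T₀.Nonempty ∧ T₁.Nonempty ∧ Disjoint T₀ T₁ ∧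
  ∀ x : Fin n → ZMod 2,
    (T₀.filter fun y => hammingDist x y ≤ 1).card =
      (T₁.filter fun y => hammingDist x y ≤ 1).card ∧
    (T₀.filter fun y => hammingDist x y ≤ 1).card ≤ 1

/-- The characteristic function of a 1-perfect trade is an
eigenfunction of the n-cube with eigenvalue -1. -/
theorem stmt_1 (n : ℕ) (T₀ T₁ : Finset (Fin n → ZMod 2))
    (hT : IsPerfTrade T₀ T₁) (f : (Fin n → ZMod 2) → ℝ)
    (hf : ∀ x, f x = if x ∈ T₀ then 1 else if x ∈ T₁ then -1 else 0) :
    (∃ x, f x ≠ 0) ∧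
      ∀ x : Fin n → ZMod 2,
        -f x = ∑ y ∈ Finset.univ.filter (fun y => hammingDist x y = 1), f y := by
  obtain ⟨⟨a, ha⟩, -, hdisj, hball⟩ := hT
  constructor
  · exact ⟨a, by simp [hf, ha]⟩
  · intro x
    have hsum : ∑ y ∈ Finset.univ.filter (fun y => hammingDist x y ≤ 1), f y = 0 := by
      have hcard := (hball x).1
      have hstep : ∑ y ∈ Finset.univ.filter (fun y => hammingDist x y ≤ 1), f y
          = ∑ y ∈ Finset.univ.filter (fun y => hammingDist x y ≤ 1),
              ((if y ∈ T₀ then (1:ℝ) else 0) - (if y ∈ T₁ then 1 else 0)) := by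
        apply Finset.sum_congr rfl
        intro y _
        rw [hf]
        by_cases h0 : y ∈ T₀
        · have : y ∉ T₁ := fun h => (Finset.disjoint_left.mp hdisj h0) h
          simp [h0, this]
        · by_cases h1 : y ∈ T₁ <;> simp [h0, h1]
      rw [hstep, Finset.sum_sub_distrib, Finset.sum_boole, Finset.sum_boole]
      have e0 : (Finset.univ.filter fun y => hammingDist x y ≤ 1).filter (· ∈ T₀)
          = T₀.filter (fun y => hammingDist x y ≤ 1) := by
        ext y; simp [and_comm]
      have e1 : (Finset.univ.filter fun y => hammingDist x y ≤ 1).filter (· ∈ T₁)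
          = T₁.filter (fun y => hammingDist x y ≤ 1) := by
        ext y; simp [and_comm]
      rw [e0, e1, hcard]
      ring
    have hsplit : Finset.univ.filter (fun y => hammingDist x y ≤ 1)
        = insert x (Finset.univ.filter (fun y => hammingDist x y = 1)) := by
      ext y
      simp only [Finset.mem_filter, Finset.mem_univ, true_and, Finset.mem_insert]
      rw [Nat.le_one_iff_eq_zero_or_eq_one, hammingDist_eq_zero, eq_comm]
    have hx : x ∉ Finset.univ.filter (fun y => hammingDist x y = 1) := by
      simp [hammingDist_self]
    rw [hsplit, Finset.sum_insert hx] at hsum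
    linarith
end

section
/- Let n ≡ 0 (mod 4) and let (T_0, T_1) be an extended 1-perfect trade of length n. Then T_0 + 1^n = T_0 and T_1 + 1^n = T_1, where T_j + 1^n = {x + 1^n : x ∈ T_j} and 1^n is the all-one word of length n; that is, each trade mate is closed under complementation. -/
/-- An extended 1-perfect trade of length `n`: a pair of disjoint nonempty sets of
even-weight binary words such that for every odd-weight word `x`, the sphere of
radius 1 around `x` contains equally many (0 or 1) elements of each set. -/
def IsExtTrade {n : ℕ} (T₀ T₁ : Finset (Fin n → ZMod 2)) : Prop :=
  T₀.Nonempty ∧ T₁.Nonempty ∧ Disjoint T₀ T₁ ∧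
  (∀ x ∈ T₀ ∪ T₁, Even (hammingNorm x)) ∧
  ∀ x : Fin n → ZMod 2, Odd (hammingNorm x) →
    (T₀.filter fun y => hammingDist x y = 1).card =
      (T₁.filter fun y => hammingDist x y = 1).card ∧
    (T₀.filter fun y => hammingDist x y = 1).card ≤ 1

namespace Stmt3Aux

open Finset

variable {n : ℕ}

abbrev V (n : ℕ) := Fin n → ZMod 2

/-- The character of the hypercube indexed by a subset `S` of coordinates. -/
def chi (S : Finset (Fin n)) (x : V n) : ℤ := ∏ i ∈ S, (-1 : ℤ) ^ (x i).val

lemma sign_add : ∀ a b : ZMod 2,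
    (-1 : ℤ) ^ ((a + b).val) = (-1 : ℤ) ^ a.val * (-1 : ℤ) ^ b.val := by decide

lemma chi_add (S : Finset (Fin n)) (x y : V n) : chi S (x + y) = chi S x * chi S y := by
  simp only [chi, Pi.add_apply, sign_add, Finset.prod_mul_distrib]

lemma chi_single (S : Finset (Fin n)) (i : Fin n) :
    chi S (Pi.single i 1) = if i ∈ S then -1 else 1 := by
  classical
  have h : ∀ j, (-1 : ℤ) ^ (((Pi.single i 1 : V n)) j).val = if j = i then -1 else 1 := by
    intro j
    rcases eq_or_ne j i with rfl | hj
    · simp only [Pi.single_eq_same, if_pos rfl]; decide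
    · simp [Pi.single_apply, hj]
  simp only [chi, h]
  exact Finset.prod_ite_eq' S i (fun _ => (-1 : ℤ))

lemma sum_chi_single (S : Finset (Fin n)) :
    ∑ i : Fin n, chi S (Pi.single i 1) = (n : ℤ) - 2 * S.card := by
  classical
  simp only [chi_single]
  have h1 : ∀ x : Fin n, (if x ∈ S then (-1 : ℤ) else 1)
      = 1 - 2 * (if x ∈ S then (1 : ℤ) else 0) := by
    intro x; split <;> ring
  simp only [h1]
  rw [Finset.sum_sub_distrib, ← Finset.mul_sum, Finset.sum_boole]
  simp

lemma sum_chi (z : V n) : ∑ S : Finset (Fin n), chi S z = if z = 0 then 2 ^ n else 0 := by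
  classical
  have key : ∑ S : Finset (Fin n), chi S z
      = ∏ i : Fin n, ((-1 : ℤ) ^ (z i).val + 1) := by
    rw [Finset.prod_add]
    rw [← Finset.powerset_univ]
    apply Finset.sum_congr rfl
    intro S _
    simp [chi]
  rw [key]
  by_cases hz : z = 0
  · subst hz; simp
  · obtain ⟨i, hi⟩ : ∃ i, z i ≠ 0 := by
      by_contra h
      push_neg at h
      exact hz (funext h)
    rw [if_neg hz]
    apply Finset.prod_eq_zero (Finset.mem_univ i)
    have key2 : ∀ a : ZMod 2, a ≠ 0 → (-1 : ℤ) ^ a.val + 1 = 0 := by decide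
    exact key2 _ hi

lemma chi_allone {S : Finset (Fin n)} (x : V n) :
    chi S (x + fun _ => (1 : ZMod 2)) = chi S x * (-1) ^ S.card := by
  rw [chi_add]
  congr 1
  have h : ∀ i ∈ S, (-1 : ℤ) ^ (((fun _ => (1 : ZMod 2)) : V n) i).val = -1 := by
    intro i _
    show (-1 : ℤ) ^ (1 : ZMod 2).val = -1
    decide
  rw [chi, Finset.prod_congr rfl h, Finset.prod_const]

/-- Fourier inversion on the hypercube. -/
lemma inversion (g : V n → ℤ) (x : V n) :
    ∑ S : Finset (Fin n), chi S x * (∑ y : V n, chi S y * g y) = 2 ^ n * g x := by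
  classical
  have hiff : ∀ y : V n, x + y = 0 ↔ y = x := by
    intro y
    constructor
    · intro h
      funext i
      have := congrFun h i
      have h2 : ∀ a b : ZMod 2, a + b = 0 → b = a := by decide
      exact h2 _ _ this
    · rintro rfl
      funext i
      have h3 : ∀ a : ZMod 2, a + a = 0 := by decide
      exact h3 _
  have step1 : ∀ S : Finset (Fin n), chi S x * (∑ y : V n, chi S y * g y)
      = ∑ y : V n, chi S (x + y) * g y := by
    intro S
    rw [Finset.mul_sum]
    apply Finset.sum_congr rfl
    intro y _
    rw [chi_add]; ring
  calc ∑ S : Finset (Fin n), chi S x * (∑ y : V n, chi S y * g y)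
      = ∑ S : Finset (Fin n), ∑ y : V n, chi S (x + y) * g y :=
        Finset.sum_congr rfl (fun S _ => step1 S)
    _ = ∑ y : V n, ∑ S : Finset (Fin n), chi S (x + y) * g y := Finset.sum_comm
    _ = ∑ y : V n, (if y = x then (2:ℤ) ^ n * g y else 0) := by
        apply Finset.sum_congr rfl
        intro y _
        rw [← Finset.sum_mul, sum_chi]
        by_cases hyx : y = x
        · rw [if_pos ((hiff y).mpr hyx), if_pos hyx]
        · rw [if_neg (fun h => hyx ((hiff y).mp h)), if_neg hyx, zero_mul]
    _ = 2 ^ n * g x := by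
        rw [Finset.sum_ite_eq' Finset.univ x (fun y => (2:ℤ) ^ n * g y)]
        simp

lemma norm_cast_eq_sum (x : V n) : ((hammingNorm x : ZMod 2)) = ∑ i, x i := by
  classical
  have h : ∀ a : ZMod 2, a = if a ≠ 0 then 1 else 0 := by decide
  calc ((hammingNorm x : ZMod 2))
      = ∑ i : Fin n, (if x i ≠ 0 then (1 : ZMod 2) else 0) := by
        rw [Finset.sum_boole]; rfl
    _ = ∑ i, x i := by
        apply Finset.sum_congr rfl
        intro i _
        exact (h (x i)).symm

lemma even_norm_iff (x : V n) : Even (hammingNorm x) ↔ (∑ i, x i) = 0 := by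
  rw [← norm_cast_eq_sum, ZMod.natCast_eq_zero_iff]
  exact even_iff_two_dvd

lemma dist_one_iff (x y : V n) :
    hammingDist x y = 1 ↔ ∃ i, y = x + (Pi.single i 1 : V n) := by
  classical
  constructor
  · intro h
    rw [hammingDist, Finset.card_eq_one] at h
    obtain ⟨i, hi⟩ := h
    refine ⟨i, funext fun j => ?_⟩
    have hmem : ∀ j : Fin n, x j ≠ y j ↔ j = i := by
      intro j
      constructor
      · intro hj
        have : j ∈ ({i} : Finset (Fin n)) := by
          rw [← hi]; simp [hj]
        simpa using this
      · intro hji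
        subst hji
        have : j ∈ Finset.filter (fun k => x k ≠ y k) Finset.univ := by
          rw [hi]; simp
        simpa using this
    rcases eq_or_ne j i with rfl | hj
    · have hne : x j ≠ y j := (hmem j).2 rfl
      have : ∀ a b : ZMod 2, a ≠ b → b = a + 1 := by decide
      simpa using this _ _ hne
    · have heq : x j = y j := by
        by_contra hne
        exact hj ((hmem j).1 hne)
      simp [Pi.single_apply, hj, ← heq]
  · rintro ⟨i, rfl⟩
    rw [hammingDist]
    have : Finset.filter (fun j => x j ≠ (x + (Pi.single i 1 : V n)) j) Finset.univ = {i} := by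
      ext j
      rcases eq_or_ne j i with rfl | hj
      · have : ∀ a : ZMod 2, a ≠ a + 1 := by decide
        simp [this]
      · simp [Pi.single_apply, hj]
    rw [this, Finset.card_singleton]

section Main

variable (T₀ T₁ : Finset (V n))

/-- The indicator difference of the two trade mates. -/
def fdiff (x : V n) : ℤ := (if x ∈ T₀ then 1 else 0) - (if x ∈ T₁ then 1 else 0)

variable {T₀ T₁}
variable (heven : ∀ x ∈ T₀ ∪ T₁, Even (hammingNorm x))
variable (hbal : ∀ x : V n, Odd (hammingNorm x) →
    (T₀.filter fun y => hammingDist x y = 1).card =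
      (T₁.filter fun y => hammingDist x y = 1).card)

include heven in
lemma fdiff_eq_zero_of_odd {x : V n} (hx : ¬ Even (hammingNorm x)) : fdiff T₀ T₁ x = 0 := by
  have h0 : x ∉ T₀ := fun h => hx (heven x (Finset.mem_union_left _ h))
  have h1 : x ∉ T₁ := fun h => hx (heven x (Finset.mem_union_right _ h))
  simp [fdiff, h0, h1]

include heven hbal in
lemma Af_zero (x : V n) : ∑ i : Fin n, fdiff T₀ T₁ (x + Pi.single i 1) = 0 := by
  classical
  by_cases hx : Even (hammingNorm x)
  · -- all neighbors have odd weight, so `fdiff` vanishes on them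
    apply Finset.sum_eq_zero
    intro i _
    apply fdiff_eq_zero_of_odd heven
    rw [even_norm_iff]
    rw [even_norm_iff] at hx
    have : ∑ j, (x + (Pi.single i 1 : V n)) j = (∑ j, x j) + 1 := by
      simp [Finset.sum_add_distrib]
    rw [this, hx]
    decide
  · -- `x` has odd weight: its neighbors are exactly the radius-1 sphere
    have himg : Finset.filter (fun y => hammingDist x y = 1) Finset.univ
        = Finset.image (fun i => x + (Pi.single i 1 : V n)) Finset.univ := by
      ext y
      simp only [Finset.mem_filter, Finset.mem_univ, true_and, Finset.mem_image]
      rw [dist_one_iff]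
      exact exists_congr fun i => eq_comm
    have hinj : ∀ i ∈ (Finset.univ : Finset (Fin n)), ∀ j ∈ Finset.univ,
        x + (Pi.single i 1 : V n) = x + Pi.single j 1 → i = j := by
      intro i _ j _ h
      have h2 : (Pi.single i 1 : V n) = Pi.single j 1 := add_left_cancel h
      by_contra hij
      have := congrFun h2 i
      simp [Pi.single_apply, hij] at this
    have hsum : ∑ i : Fin n, fdiff T₀ T₁ (x + Pi.single i 1)
        = ∑ y ∈ Finset.filter (fun y => hammingDist x y = 1) Finset.univ, fdiff T₀ T₁ y := by
      rw [himg, Finset.sum_image hinj]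
    rw [hsum]
    have hodd : Odd (hammingNorm x) := Nat.not_even_iff_odd.mp hx
    have hcard := hbal x hodd
    have hsplit : ∀ (T : Finset (V n)),
        ∑ y ∈ Finset.filter (fun y => hammingDist x y = 1) Finset.univ,
          (if y ∈ T then (1 : ℤ) else 0)
        = (T.filter fun y => hammingDist x y = 1).card := by
      intro T
      rw [Finset.sum_boole]
      congr 1
      rw [Finset.filter_filter]
      congr 1
      ext y
      simp [and_comm]
    simp only [fdiff, Finset.sum_sub_distrib, hsplit, hcard, sub_self]

include heven hbal in
lemma fhat_zero {S : Finset (Fin n)} (hS : 2 * S.card ≠ n) :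
    ∑ x : V n, chi S x * fdiff T₀ T₁ x = 0 := by
  classical
  have h0 : ∑ x : V n, chi S x * (∑ i : Fin n, fdiff T₀ T₁ (x + Pi.single i 1)) = 0 := by
    simp [Af_zero heven hbal]
  have htrans : ∀ (c : V n) (h : V n → ℤ), ∑ x : V n, h (x + c) = ∑ x : V n, h x := by
    intro c h
    exact Fintype.sum_equiv (Equiv.addRight c) _ _ (fun x => rfl)
  have h1 : ∑ x : V n, chi S x * (∑ i : Fin n, fdiff T₀ T₁ (x + Pi.single i 1))
      = ((n : ℤ) - 2 * S.card) * ∑ x : V n, chi S x * fdiff T₀ T₁ x := by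
    calc ∑ x : V n, chi S x * (∑ i : Fin n, fdiff T₀ T₁ (x + Pi.single i 1))
        = ∑ i : Fin n, ∑ x : V n, chi S x * fdiff T₀ T₁ (x + Pi.single i 1) := by
          rw [Finset.sum_comm]
          simp [Finset.mul_sum]
      _ = ∑ i : Fin n, ∑ x : V n, chi S (x + Pi.single i 1) * fdiff T₀ T₁ (x + Pi.single i 1)
            * chi S (Pi.single i 1) := by
          apply Finset.sum_congr rfl; intro i _
          apply Finset.sum_congr rfl; intro x _
          have hss : chi S (Pi.single i 1) * chi S (Pi.single i 1) = 1 := by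
            rw [chi_single]; split <;> norm_num
          rw [chi_add]
          have h2 : chi S (Pi.single i 1) ^ 2 = 1 := by rw [sq]; exact hss
          ring_nf
          rw [h2, mul_one]
      _ = ∑ i : Fin n, (∑ x : V n, chi S x * fdiff T₀ T₁ x) * chi S (Pi.single i 1) := by
          apply Finset.sum_congr rfl; intro i _
          rw [← Finset.sum_mul]
          congr 1
          exact htrans (Pi.single i 1) (fun z => chi S z * fdiff T₀ T₁ z)
      _ = ((n : ℤ) - 2 * S.card) * ∑ x : V n, chi S x * fdiff T₀ T₁ x := by
          rw [← Finset.mul_sum, sum_chi_single S]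
          ring
  rw [h1] at h0
  rcases mul_eq_zero.mp h0 with h | h
  · exfalso
    apply hS
    omega
  · exact h

include heven hbal in
lemma fdiff_invariant (hn : n % 4 = 0) (x : V n) :
    fdiff T₀ T₁ (x + fun _ => (1 : ZMod 2)) = fdiff T₀ T₁ x := by
  classical
  have hcancel : ((2 : ℤ) ^ n) ≠ 0 := by positivity
  apply mul_left_cancel₀ hcancel
  rw [← inversion (fdiff T₀ T₁) (x + fun _ => (1 : ZMod 2)), ← inversion (fdiff T₀ T₁) x]
  apply Finset.sum_congr rfl
  intro S _
  by_cases hS : 2 * S.card = n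
  · rw [chi_allone]
    have hev : Even S.card := ⟨n / 4, by omega⟩
    rw [hev.neg_one_pow, mul_one]
  · rw [fhat_zero heven hbal hS, mul_zero, mul_zero]

end Main

end Stmt3Aux

/-- For n ≡ 0 (mod 4), each mate of an extended 1-perfect trade of
length n is closed under complementation (addition of the all-one word). -/
theorem stmt_3 (n : ℕ) (hn : n % 4 = 0) (T₀ T₁ : Finset (Fin n → ZMod 2))
    (hT : IsExtTrade T₀ T₁) :
    T₀.image (fun x => x + fun _ => (1 : ZMod 2)) = T₀ ∧
    T₁.image (fun x => x + fun _ => (1 : ZMod 2)) = T₁ := by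
  classical
  obtain ⟨-, -, hdisj, heven, hbal'⟩ := hT
  have hbal : ∀ x : Fin n → ZMod 2, Odd (hammingNorm x) →
      (T₀.filter fun y => hammingDist x y = 1).card =
        (T₁.filter fun y => hammingDist x y = 1).card := fun x hx => (hbal' x hx).1
  have hf := Stmt3Aux.fdiff_invariant heven hbal hn
  have hmem0 : ∀ x, x ∈ T₀ ↔ Stmt3Aux.fdiff T₀ T₁ x = 1 := by
    intro x
    unfold Stmt3Aux.fdiff
    by_cases h0 : x ∈ T₀ <;> by_cases h1 : x ∈ T₁
    · exact absurd h1 (Finset.disjoint_left.mp hdisj h0)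
    · simp [h0, h1]
    · simp [h0, h1]
    · simp [h0, h1]
  have hmem1 : ∀ x, x ∈ T₁ ↔ Stmt3Aux.fdiff T₀ T₁ x = -1 := by
    intro x
    unfold Stmt3Aux.fdiff
    by_cases h0 : x ∈ T₀ <;> by_cases h1 : x ∈ T₁
    · exact absurd h1 (Finset.disjoint_left.mp hdisj h0)
    · simp [h0, h1]
    · simp [h0, h1]
    · simp [h0, h1]
  have hinv : ∀ x : Fin n → ZMod 2, (x + fun _ => (1 : ZMod 2)) + (fun _ => (1 : ZMod 2)) = x := by
    intro x
    funext i
    have : ∀ a : ZMod 2, a + 1 + 1 = a := by decide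
    exact this (x i)
  have key : ∀ (T : Finset (Fin n → ZMod 2)),
      (∀ x, x ∈ T ↔ (x + fun _ => (1 : ZMod 2)) ∈ T) →
      T.image (fun x => x + fun _ => (1 : ZMod 2)) = T := by
    intro T hclosed
    ext y
    simp only [Finset.mem_image]
    constructor
    · rintro ⟨x, hx, rfl⟩
      exact (hclosed x).mp hx
    · intro hy
      exact ⟨y + fun _ => (1 : ZMod 2), (hclosed y).mp hy, hinv y⟩
  constructor
  · apply key
    intro x
    rw [hmem0, hmem0, hf x]
  · apply key
    intro x
    rw [hmem1, hmem1, hf x]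
end

section
/- Let n ≡ 2 (mod 4) and let (T_0, T_1) be an extended 1-perfect trade of length n. Then T_0 = T_1 + 1^n, where T_1 + 1^n = {x + 1^n : x ∈ T_1} and 1^n is the all-one word of length n; that is, the two trade mates are complements of each other. -/
/-!
Put `f = 𝟙_{T₀} - 𝟙_{T₁}` on `𝔽₂ⁿ`. Since `f` vanishes on odd words and the trade condition
balances every sphere around an odd word, the sum of `f` over the `n` neighbours of any word is
zero: `f` is in the kernel of the adjacency operator of the hypercube. The Walsh characters
`χ_c(x) = (-1)^(c·x)` diagonalise that operator with eigenvalues `n - 2|c|`, so the Walsh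
transform of `f` lives on words of weight `n / 2`. As `χ_c(x + 1ⁿ) = (-1)^|c| χ_c(x)` and `n / 2`
is odd, `f (x + 1ⁿ) = -f x`, i.e. `x ∈ T₀ ↔ x + 1ⁿ ∈ T₁`.
-/

namespace BinaryWord

open Finset

variable {n : ℕ}

lemma eq_one_of_ne_zero {a : ZMod 2} (h : a ≠ 0) : a = 1 := by
  fin_cases a
  exacts [absurd rfl h, rfl]

def toSign (a : ZMod 2) : ℤ := if a = 0 then 1 else -1

lemma toSign_add (a b : ZMod 2) : toSign (a + b) = toSign a * toSign b := by
  fin_cases a <;> fin_cases b <;> rfl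

lemma sum_toSign (c : Fin n → ZMod 2) : ∑ i, toSign (c i) = n - 2 * hammingNorm c := by
  have hsplit := card_filter_add_card_filter_not (s := univ) (fun i => c i = 0)
  simp only [card_univ, Fintype.card_fin] at hsplit
  simp only [toSign, sum_ite, sum_const, nsmul_eq_mul, mul_one, mul_neg, hammingNorm]
  push_cast [← hsplit]
  ring

lemma prod_toSign (c : Fin n → ZMod 2) : ∏ i, toSign (c i) = (-1) ^ hammingNorm c := by
  simp [toSign, prod_ite, hammingNorm]

-- `walsh c x = χ_c(x) = (-1)^(c·x)`
def walsh (c x : Fin n → ZMod 2) : ℤ := ∏ i, toSign (c i * x i)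

lemma walsh_comm (c x : Fin n → ZMod 2) : walsh c x = walsh x c := by
  simp only [walsh, mul_comm]

lemma walsh_add (c x y : Fin n → ZMod 2) : walsh c (x + y) = walsh c x * walsh c y := by
  simp only [walsh, Pi.add_apply, mul_add, toSign_add, prod_mul_distrib]

lemma walsh_single (c : Fin n → ZMod 2) (i : Fin n) :
    walsh c (Pi.single i 1) = toSign (c i) := by
  rw [walsh, prod_eq_single i] <;> simp +contextual [toSign]

lemma walsh_one (c : Fin n → ZMod 2) : walsh c 1 = (-1) ^ hammingNorm c := by
  simp only [walsh, Pi.one_apply, mul_one, prod_toSign]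

lemma sum_walsh (c : Fin n → ZMod 2) : ∑ x, walsh c x = if c = 0 then 2 ^ n else 0 := by
  split_ifs with hc
  · simp [hc, walsh, toSign]
  obtain ⟨i, hi⟩ := Function.ne_iff.1 hc
  have hflip : ∀ x, walsh c (x + Pi.single i 1) = -walsh c x := by
    simp [walsh_add, walsh_single, toSign, show c i ≠ 0 from hi]
  have := Fintype.sum_equiv (Equiv.addRight (Pi.single i 1))
    (fun x => walsh c (x + Pi.single i 1)) (walsh c) fun _ => rfl
  simp only [hflip, sum_neg_distrib] at this
  linarith

def walshTransform (f : (Fin n → ZMod 2) → ℤ) (c : Fin n → ZMod 2) : ℤ :=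
  ∑ x, f x * walsh c x

lemma sum_walshTransform_mul_walsh (f : (Fin n → ZMod 2) → ℤ) (x : Fin n → ZMod 2) :
    ∑ c, walshTransform f c * walsh c x = 2 ^ n * f x := by
  have horth : ∀ y, ∑ c, walsh c y * walsh c x = if y = x then 2 ^ n else 0 := by
    intro y
    simp only [← walsh_add]
    rw [sum_congr rfl fun c _ => walsh_comm c (y + x), sum_walsh]
    simp only [← ZModModule.sub_eq_add, sub_eq_zero]
  calc ∑ c, walshTransform f c * walsh c x
      = ∑ y, f y * ∑ c, walsh c y * walsh c x := by
        simp only [walshTransform, sum_mul, mul_sum, mul_assoc]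
        exact sum_comm
    _ = 2 ^ n * f x := by
        simp only [horth, mul_ite, mul_zero, sum_ite_eq', mem_univ, if_true]
        exact mul_comm _ _

def neighbourSum (f : (Fin n → ZMod 2) → ℤ) (x : Fin n → ZMod 2) : ℤ :=
  ∑ i, f (x + Pi.single i 1)

lemma walshTransform_neighbourSum (f : (Fin n → ZMod 2) → ℤ) (c : Fin n → ZMod 2) :
    walshTransform (neighbourSum f) c = (n - 2 * hammingNorm c) * walshTransform f c := by
  have hshift :
      ∀ i, ∑ x, f (x + Pi.single i 1) * walsh c x = toSign (c i) * walshTransform f c := by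
    intro i
    rw [← Fintype.sum_equiv (Equiv.addRight (Pi.single i 1))
      (fun y => f y * walsh c (y + Pi.single i 1)) _ fun y => by
        simp [add_assoc, ZModModule.add_self]]
    simp only [walsh_add, walsh_single, walshTransform, mul_sum]
    exact sum_congr rfl fun _ _ => by ring
  rw [walshTransform]
  simp only [neighbourSum, sum_mul]
  rw [sum_comm]
  simp only [hshift, ← sum_mul, sum_toSign]

lemma apply_add_one_of_neighbourSum_eq_zero {f : (Fin n → ZMod 2) → ℤ} {k : ℕ} (hk : n = 2 * k)
    (hf : ∀ x, neighbourSum f x = 0) (x : Fin n → ZMod 2) : f (x + 1) = (-1) ^ k * f x := by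
  have hsupp : ∀ c, walshTransform f c * walsh c 1 = (-1) ^ k * walshTransform f c := by
    intro c
    by_cases h0 : walshTransform f c = 0
    · simp [h0]
    have hzero := walshTransform_neighbourSum f c
    simp only [walshTransform, hf, zero_mul, sum_const_zero] at hzero
    have hc : hammingNorm c = k := by
      have := (mul_eq_zero.1 hzero.symm).resolve_right h0
      omega
    rw [walsh_one, hc, mul_comm]
  have h2n : (2 : ℤ) ^ n * f (x + 1) = 2 ^ n * ((-1) ^ k * f x) := by
    rw [← sum_walshTransform_mul_walsh, mul_left_comm, ← sum_walshTransform_mul_walsh, mul_sum]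
    refine sum_congr rfl fun c _ => ?_
    rw [walsh_add]
    linear_combination walsh c x * hsupp c
  exact mul_left_cancel₀ (by positivity) h2n

lemma hammingNorm_single {ι β : Type*} [Fintype ι] [DecidableEq ι] [Zero β] [DecidableEq β]
    (i : ι) {b : β} (hb : b ≠ 0) : hammingNorm (Pi.single i b : ι → β) = 1 := by
  rw [hammingNorm, card_eq_one]
  exact ⟨i, by ext j; by_cases h : j = i <;> simp [h, hb]⟩

lemma hammingNorm_eq_one_iff {d : Fin n → ZMod 2} :
    hammingNorm d = 1 ↔ ∃ i, d = Pi.single i 1 := by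
  constructor
  · rw [hammingNorm, card_eq_one]
    rintro ⟨i, hi⟩
    have hsupp : ∀ j, d j ≠ 0 ↔ j = i := fun j => by simpa using Finset.ext_iff.1 hi j
    refine ⟨i, funext fun j => ?_⟩
    by_cases h : j = i
    · subst h
      simp [eq_one_of_ne_zero ((hsupp j).2 rfl)]
    · simp [h, not_not.1 (mt (hsupp j).1 h)]
  · rintro ⟨i, rfl⟩
    exact hammingNorm_single i one_ne_zero

lemma sum_sphere_eq_neighbourSum (g : (Fin n → ZMod 2) → ℤ) (x : Fin n → ZMod 2) :
    ∑ y ∈ univ.filter (fun y => hammingDist x y = 1), g y = neighbourSum g x := by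
  have hsphere : univ.filter (fun y => hammingDist x y = 1) =
      univ.image (fun i => x + Pi.single i 1) := by
    ext y
    rw [mem_filter, mem_image, hammingDist_eq_hammingNorm, hammingNorm_eq_one_iff]
    simp only [mem_univ, true_and]
    exact exists_congr fun i => by rw [neg_add_eq_iff_eq_add, eq_comm]
  rw [hsphere, sum_image fun i _ j _ h => by
    simpa [Pi.single_apply] using congrFun (add_left_cancel h) i]
  rfl

lemma natCast_hammingNorm (x : Fin n → ZMod 2) : (hammingNorm x : ZMod 2) = ∑ i, x i := by
  rw [← sum_filter_ne_zero, sum_congr rfl fun i hi => eq_one_of_ne_zero (mem_filter.1 hi).2]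
  simp [hammingNorm]

lemma even_hammingNorm_add_single (x : Fin n → ZMod 2) (i : Fin n) :
    Even (hammingNorm (x + Pi.single i 1)) ↔ ¬Even (hammingNorm x) := by
  simp only [← ZMod.natCast_eq_zero_iff_even, natCast_hammingNorm, Pi.add_apply, sum_add_distrib,
    sum_pi_single', mem_univ, if_true]
  generalize ∑ j, x j = s
  revert s
  decide

section signedIndicator

variable {α : Type*} [DecidableEq α] {T₀ T₁ : Finset α} {y : α}

def signedIndicator (T₀ T₁ : Finset α) (y : α) : ℤ :=
  (if y ∈ T₀ then 1 else 0) - (if y ∈ T₁ then 1 else 0)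

lemma signedIndicator_eq_one_iff (h : Disjoint T₀ T₁) : signedIndicator T₀ T₁ y = 1 ↔ y ∈ T₀ := by
  have : y ∈ T₀ → y ∉ T₁ := fun hy => disjoint_left.1 h hy
  by_cases h₀ : y ∈ T₀ <;> by_cases h₁ : y ∈ T₁ <;> simp_all [signedIndicator]

lemma signedIndicator_eq_neg_one_iff (h : Disjoint T₀ T₁) :
    signedIndicator T₀ T₁ y = -1 ↔ y ∈ T₁ := by
  have : y ∈ T₀ → y ∉ T₁ := fun hy => disjoint_left.1 h hy
  by_cases h₀ : y ∈ T₀ <;> by_cases h₁ : y ∈ T₁ <;> simp_all [signedIndicator]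

lemma signedIndicator_of_notMem_union (h : y ∉ T₀ ∪ T₁) : signedIndicator T₀ T₁ y = 0 := by
  simp_all [signedIndicator]

lemma sum_signedIndicator (S : Finset α) :
    ∑ y ∈ S, signedIndicator T₀ T₁ y = #(T₀.filter (· ∈ S)) - #(T₁.filter (· ∈ S)) := by
  simp only [signedIndicator, sum_sub_distrib, sum_boole, filter_mem_eq_inter, inter_comm S]

end signedIndicator

end BinaryWord

open BinaryWord

lemma IsExtTrade.neighbourSum_signedIndicator_eq_zero {n : ℕ} {T₀ T₁ : Finset (Fin n → ZMod 2)}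
    (hT : IsExtTrade T₀ T₁) (x : Fin n → ZMod 2) : neighbourSum (signedIndicator T₀ T₁) x = 0 := by
  obtain ⟨-, -, -, heven, hsphere⟩ := hT
  rcases Nat.even_or_odd (hammingNorm x) with hx | hx
  · refine Finset.sum_eq_zero fun i _ => signedIndicator_of_notMem_union fun hmem => ?_
    exact (even_hammingNorm_add_single x i).1 (heven _ hmem) hx
  · rw [← sum_sphere_eq_neighbourSum, sum_signedIndicator, sub_eq_zero]
    simpa only [Finset.mem_filter, Finset.mem_univ, true_and] using
      congrArg Nat.cast (hsphere x hx).1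

/-- For n ≡ 2 (mod 4), the two mates of an extended 1-perfect trade
of length n are complements of each other. -/
theorem stmt_4 (n : ℕ) (hn : n % 4 = 2) (T₀ T₁ : Finset (Fin n → ZMod 2))
    (hT : IsExtTrade T₀ T₁) :
    T₀ = T₁.image (fun x => x + fun _ => (1 : ZMod 2)) := by
  have hdisj : Disjoint T₀ T₁ := hT.2.2.1
  have hanti : ∀ y, signedIndicator T₀ T₁ (y + 1) = -signedIndicator T₀ T₁ y := fun y => by
    rw [apply_add_one_of_neighbourSum_eq_zero (k := n / 2) (by omega)
      hT.neighbourSum_signedIndicator_eq_zero, (Nat.odd_iff.2 (by omega)).neg_one_pow, neg_one_mul]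
  have hmem : ∀ y, y ∈ T₀ ↔ y + 1 ∈ T₁ := fun y => by
    rw [← signedIndicator_eq_one_iff hdisj, ← signedIndicator_eq_neg_one_iff hdisj, hanti, neg_inj]
  have hinv : ∀ y : Fin n → ZMod 2, y + 1 + 1 = y := fun y => by
    rw [add_assoc, ZModModule.add_self, add_zero]
  change T₀ = T₁.image (· + 1)
  ext y
  rw [Finset.mem_image, hmem]
  constructor
  · exact fun h => ⟨_, h, hinv y⟩
  · rintro ⟨a, ha, rfl⟩
    rwa [hinv]
end

section
/- Let (T_0, T_1) be an extended 1-perfect trade of length n. For a set T of words of length n and a pair of symbols ab ∈ {00, 11}, let T·ab denote the set of words of length n+2 obtained by appending the two symbols a, b to each word of T. Then the pair (T_0·00 ∪ T_1·11, T_0·11 ∪ T_1·00) is an extended 1-perfect trade of length n+2. -/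
/-- Append two fixed symbols a, b to every word of T. -/
def app2 {n : ℕ} (T : Finset (Fin n → ZMod 2)) (a b : ZMod 2) :
    Finset (Fin (n + 2) → ZMod 2) :=
  T.image fun x => Fin.append x ![a, b]

open Finset

lemma append_inj {n : ℕ} (a b : ZMod 2) :
    Function.Injective (fun x : Fin n → ZMod 2 => Fin.append x ![a, b]) := by
  intro x y h
  funext i
  have := congrFun h (Fin.castAdd 2 i)
  simpa [Fin.append_left] using this

lemma eq_append {n m : ℕ} (x : Fin (n + m) → ZMod 2) :
    x = Fin.append (fun i => x (Fin.castAdd m i)) (fun i => x (Fin.natAdd n i)) := by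
  funext i
  cases i using Fin.addCases with
  | left i => simp [Fin.append_left]
  | right i => simp [Fin.append_right]

lemma hammingDist_append {n m : ℕ} (a c : Fin n → ZMod 2) (b d : Fin m → ZMod 2) :
    hammingDist (Fin.append a b) (Fin.append c d) = hammingDist a c + hammingDist b d := by
  classical
  simp only [hammingDist, Finset.card_filter]
  rw [Fin.sum_univ_add]
  simp [Fin.append_left, Fin.append_right]

lemma hammingNorm_append {n m : ℕ} (a : Fin n → ZMod 2) (b : Fin m → ZMod 2) :
    hammingNorm (Fin.append a b) = hammingNorm a + hammingNorm b := by
  classical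
  simp only [hammingNorm, Finset.card_filter]
  rw [Fin.sum_univ_add]
  simp [Fin.append_left, Fin.append_right]

lemma mem_app2 {n : ℕ} {T : Finset (Fin n → ZMod 2)} {a b : ZMod 2}
    {y : Fin (n + 2) → ZMod 2} :
    y ∈ app2 T a b ↔ ∃ t ∈ T, Fin.append t ![a, b] = y := by
  simp [app2]

lemma app2_disj_of_ne {n : ℕ} (S S' : Finset (Fin n → ZMod 2)) {a b a' b' : ZMod 2}
    (h : b ≠ b') : Disjoint (app2 S a b) (app2 S' a' b') := by
  rw [Finset.disjoint_left]
  rintro y hy hy'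
  obtain ⟨t, _, rfl⟩ := mem_app2.1 hy
  obtain ⟨s, _, he⟩ := mem_app2.1 hy'
  have := congrFun he (Fin.natAdd n 1)
  simp only [Fin.append_right] at this
  exact h (by simpa using this.symm)

lemma app2_disj_of_disj {n : ℕ} {S S' : Finset (Fin n → ZMod 2)} (a b : ZMod 2)
    (h : Disjoint S S') : Disjoint (app2 S a b) (app2 S' a b) := by
  rw [Finset.disjoint_left]
  rintro y hy hy'
  obtain ⟨t, ht, rfl⟩ := mem_app2.1 hy
  obtain ⟨s, hs, he⟩ := mem_app2.1 hy'
  have := append_inj a b he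
  subst this
  exact Finset.disjoint_left.1 h ht hs

lemma card_filter_app2 {n : ℕ} (S : Finset (Fin n → ZMod 2)) (a b : ZMod 2)
    (x' : Fin n → ZMod 2) (v : Fin 2 → ZMod 2) :
    ((app2 S a b).filter fun y => hammingDist (Fin.append x' v) y = 1).card =
      (S.filter fun t => hammingDist x' t + hammingDist v ![a, b] = 1).card := by
  classical
  rw [app2, Finset.filter_image, Finset.card_image_of_injective _ (append_inj a b)]
  congr 1
  apply Finset.filter_congr
  intro t _
  simp only [Function.comp_apply, hammingDist_append]

lemma vcases (v : Fin 2 → ZMod 2) (h : Even (hammingNorm v)) :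
    v = ![0, 0] ∨ v = ![1, 1] := by revert h; revert v; decide

lemma vdist_odd (v : Fin 2 → ZMod 2) (h : Odd (hammingNorm v)) :
    hammingDist v ![(0 : ZMod 2), 0] = 1 ∧ hammingDist v ![(1 : ZMod 2), 1] = 1 := by
  revert h; revert v; decide


/-- From an extended 1-perfect trade of length n one obtains an
extended 1-perfect trade of length n+2 by appending 00/11 as indicated. -/
theorem stmt_7 (n : ℕ) (T₀ T₁ : Finset (Fin n → ZMod 2)) (hT : IsExtTrade T₀ T₁) :
    IsExtTrade (app2 T₀ 0 0 ∪ app2 T₁ 1 1) (app2 T₀ 1 1 ∪ app2 T₁ 0 0) := by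
  classical
  obtain ⟨h0ne, h1ne, hdisj, heven, hsph⟩ := hT
  have d00 : Disjoint (app2 T₀ (0:ZMod 2) 0) (app2 T₁ (1:ZMod 2) 1) :=
    app2_disj_of_ne _ _ (by decide)
  have d11 : Disjoint (app2 T₀ (1:ZMod 2) 1) (app2 T₁ (0:ZMod 2) 0) :=
    app2_disj_of_ne _ _ (by decide)
  refine ⟨(h0ne.image _).inl, (h0ne.image _).inl, ?_, ?_, ?_⟩
  · simp only [Finset.disjoint_union_left, Finset.disjoint_union_right]
    exact ⟨⟨app2_disj_of_ne _ _ (by decide), app2_disj_of_disj _ _ hdisj.symm⟩,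
      ⟨app2_disj_of_disj _ _ hdisj, app2_disj_of_ne _ _ (by decide)⟩⟩
  · intro y hy
    simp only [Finset.mem_union] at hy
    rcases hy with (h | h) | (h | h) <;> obtain ⟨t, ht, rfl⟩ := mem_app2.1 h <;>
      rw [hammingNorm_append]
    · simpa [show hammingNorm ![(0:ZMod 2),0] = 0 from by decide] using
        heven t (Finset.mem_union_left _ ht)
    · simpa [show hammingNorm ![(1:ZMod 2),1] = 2 from by decide, Nat.even_add] using
        heven t (Finset.mem_union_right _ ht)
    · simpa [show hammingNorm ![(1:ZMod 2),1] = 2 from by decide, Nat.even_add] using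
        heven t (Finset.mem_union_left _ ht)
    · simpa [show hammingNorm ![(0:ZMod 2),0] = 0 from by decide] using
        heven t (Finset.mem_union_right _ ht)
  · intro X hX
    obtain ⟨x', v, rfl⟩ : ∃ x' v, X = Fin.append x' v := ⟨_, _, eq_append X⟩
    rw [hammingNorm_append] at hX
    rw [Finset.filter_union, Finset.filter_union,
      Finset.card_union_of_disjoint
        (d00.mono (Finset.filter_subset _ _) (Finset.filter_subset _ _)),
      Finset.card_union_of_disjoint
        (d11.mono (Finset.filter_subset _ _) (Finset.filter_subset _ _)),
      card_filter_app2, card_filter_app2, card_filter_app2, card_filter_app2]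
    by_cases hev : Even (hammingNorm v)
    · have hodd : Odd (hammingNorm x') := (Nat.odd_add.1 hX).2 hev
      obtain ⟨heq, hle⟩ := hsph x' hodd
      have hz : ∀ S : Finset (Fin n → ZMod 2),
          (S.filter fun t => hammingDist x' t + 2 = 1) = ∅ :=
        fun S => Finset.filter_false_of_mem (fun t _ => by omega)
      rcases vcases v hev with rfl | rfl
      · simp only [show hammingDist ![(0:ZMod 2),0] ![(0:ZMod 2),0] = 0 from by decide,
          show hammingDist ![(0:ZMod 2),0] ![(1:ZMod 2),1] = 2 from by decide, add_zero,
          hz, Finset.card_empty]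
        omega
      · simp only [show hammingDist ![(1:ZMod 2),1] ![(1:ZMod 2),1] = 0 from by decide,
          show hammingDist ![(1:ZMod 2),1] ![(0:ZMod 2),0] = 2 from by decide, add_zero,
          hz, Finset.card_empty]
        omega
    · obtain ⟨e0, e1⟩ := vdist_odd v (Nat.not_even_iff_odd.mp hev)
      rw [e0, e1]
      have hz : ∀ S : Finset (Fin n → ZMod 2),
          (S.filter fun t => hammingDist x' t + 1 = 1) = S.filter (fun t => t = x') := by
        intro S
        apply Finset.filter_congr
        intro t _
        constructor
        · intro h
          exact (hammingDist_eq_zero.mp (by omega)).symm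
        · rintro rfl
          simp
      rw [hz, hz]
      refine ⟨rfl, ?_⟩
      rw [Finset.filter_eq', Finset.filter_eq']
      split_ifs with h0 h1
      · exact (Finset.disjoint_left.1 hdisj h0 h1).elim
      · simp
      · simp
      · simp
end

section
/- Let n be an even positive integer and let T_0, T_1 be disjoint nonempty sets of even-weight binary words of length n. Then (T_0, T_1) is an extended 1-perfect trade of length n if and only if the following three conditions hold: (a) no two distinct words of T_0 are at Hamming distance 2; (b) no two distinct words of T_1 are at Hamming distance 2; (c) every word of T_0 is at Hamming distance 2 from exactly n/2 words of T_1, and every word of T_1 is at Hamming distance 2 from exactly n/2 words of T_0. Equivalently, the subgraph of the halved n-cube induced by T_0 ∪ T_1 is bipartite with parts T_0, T_1 and regular of degree n/2. -/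
/-! Flipping coordinate `i` of a word moves it one step towards or away from `z`, according as
it differs from `z` at `i` or not. So two words at distance 2 have a common neighbour, and two
even-weight words with a common neighbour are at distance 2, since distances between even-weight
words are even. For `y ∈ T₀ \ T₁`, the flip `y + eᵢ` has a neighbour in `T₁` exactly when `i` lies
in the support of `y + z` for some `z ∈ T₁` at distance 2 from `y`. When `T₁` has no two words at
distance 2 these supports are disjoint pairs, so they cover all `n` coordinates iff there are
`n / 2` of them. -/

open Finset

section

variable {ι : Type*} [Fintype ι]

lemma natCast_hammingNorm_eq_sum (v : ι → ZMod 2) : (hammingNorm v : ZMod 2) = ∑ i, v i := by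
  rw [← sum_filter_ne_zero, hammingNorm, cast_card]
  refine sum_congr rfl fun i hi => ?_
  have hvi := (mem_filter.1 hi).2
  revert hvi
  generalize v i = a
  revert a
  decide

lemma even_hammingDist {x y : ι → ZMod 2} (hx : Even (hammingNorm x))
    (hy : Even (hammingNorm y)) : Even (hammingDist x y) := by
  rw [← ZMod.natCast_eq_zero_iff_even] at hx hy ⊢
  rw [hammingDist_eq_hammingNorm, natCast_hammingNorm_eq_sum]
  simp only [Pi.add_apply, Pi.neg_apply, sum_add_distrib, sum_neg_distrib,
    ← natCast_hammingNorm_eq_sum, hx, hy, neg_zero, add_zero]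

lemma hammingDist_eq_two_of_hammingDist_eq_one {x y z : ι → ZMod 2}
    (hy : Even (hammingNorm y)) (hz : Even (hammingNorm z)) (hyz : y ≠ z)
    (hxy : hammingDist x y = 1) (hxz : hammingDist x z = 1) : hammingDist y z = 2 := by
  have hle := hammingDist_triangle y x z
  rw [hammingDist_comm y x] at hle
  have hpos := hammingDist_pos.2 hyz
  obtain ⟨k, hk⟩ := even_hammingDist hy hz
  omega

variable {A B : Finset (ι → ZMod 2)}

lemma card_filter_hammingDist_eq_one_le_one (hA : ∀ y ∈ A, Even (hammingNorm y))
    (hfree : (A : Set (ι → ZMod 2)).Pairwise fun y z => hammingDist y z ≠ 2)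
    (x : ι → ZMod 2) : #(A.filter fun y => hammingDist x y = 1) ≤ 1 := by
  refine card_le_one.2 fun y hy z hz => by_contra fun hyz => ?_
  rw [mem_filter] at hy hz
  exact hfree hy.1 hz.1 hyz
    (hammingDist_eq_two_of_hammingDist_eq_one (hA y hy.1) (hA z hz.1) hyz hy.2 hz.2)

variable [DecidableEq ι]

lemma hammingDist_add_single_of_eq {x y : ι → ZMod 2} {i : ι} (h : x i = y i) :
    hammingDist (x + Pi.single i 1) y = hammingDist x y + 1 := by
  have hset : (univ.filter fun j => (x + Pi.single i 1 : ι → ZMod 2) j ≠ y j) =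
      insert i (univ.filter fun j => x j ≠ y j) := by
    ext j
    by_cases hj : j = i
    · subst hj; simp [h]
    · simp [hj]
  rw [hammingDist, hset, card_insert_of_notMem (by simp [h]), hammingDist]

lemma hammingDist_add_single_of_ne {x y : ι → ZMod 2} {i : ι} (h : x i ≠ y i) :
    hammingDist (x + Pi.single i 1) y + 1 = hammingDist x y := by
  have hset : (univ.filter fun j => (x + Pi.single i 1 : ι → ZMod 2) j ≠ y j) =
      (univ.filter fun j => x j ≠ y j).erase i := by
    ext j
    by_cases hj : j = i
    · subst hj
      suffices x j + 1 = y j by simpa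
      revert h; generalize x j = a; generalize y j = b; revert a b; decide
    · simp [hj]
  rw [hammingDist, hset, card_erase_add_one (by simp [h]), hammingDist]

lemma odd_hammingNorm_add_single {x : ι → ZMod 2} (hx : Even (hammingNorm x)) (i : ι) :
    Odd (hammingNorm (x + Pi.single i 1)) := by
  rw [← hammingDist_zero_right] at hx ⊢
  by_cases h : x i = (0 : ι → ZMod 2) i
  · rw [hammingDist_add_single_of_eq h]
    exact hx.add_one
  · rw [← hammingDist_add_single_of_ne h, Nat.even_add_one, Nat.not_even_iff_odd] at hx
    exact hx

lemma hammingDist_add_single_self (x : ι → ZMod 2) (i : ι) :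
    hammingDist (x + Pi.single i 1) x = 1 := by
  rw [hammingDist_add_single_of_eq rfl, hammingDist_self]

lemma eq_add_single_of_hammingDist_eq_one {x y : ι → ZMod 2} (h : hammingDist x y = 1) :
    ∃ i, x = y + Pi.single i 1 := by
  obtain ⟨i, hi⟩ := Function.ne_iff.1 (hammingDist_pos.1 (h ▸ Nat.one_pos))
  refine ⟨i, (hammingDist_eq_zero.1 ?_).symm⟩
  have := hammingDist_add_single_of_ne (Ne.symm hi)
  rw [hammingDist_comm y x, h] at this
  omega

lemma pairwise_hammingDist_ne_two (hA : ∀ y ∈ A, Even (hammingNorm y))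
    (hle : ∀ x : ι → ZMod 2, Odd (hammingNorm x) →
      #(A.filter fun y => hammingDist x y = 1) ≤ 1) :
    (A : Set (ι → ZMod 2)).Pairwise fun y z => hammingDist y z ≠ 2 := by
  intro y hy z hz hyz hdist
  obtain ⟨j, hj⟩ := Function.ne_iff.1 hyz
  have hz₁ := hammingDist_add_single_of_ne hj
  have hsub : {y, z} ⊆ A.filter fun w => hammingDist (y + Pi.single j 1) w = 1 :=
    insert_subset (mem_filter.2 ⟨hy, hammingDist_add_single_self y j⟩)
      (singleton_subset_iff.2 (mem_filter.2 ⟨hz, by omega⟩))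
  have hcard := card_le_card hsub
  rw [card_pair hyz] at hcard
  have := hle _ (odd_hammingNorm_add_single (hA y hy) j)
  omega

lemma exists_hammingDist_add_single_eq_one_iff {y : ι → ZMod 2} (hy : y ∉ B) (i : ι) :
    (∃ z ∈ B, hammingDist (y + Pi.single i 1) z = 1) ↔
      ∃ z ∈ B.filter fun z => hammingDist y z = 2, y i ≠ z i := by
  constructor
  · rintro ⟨z, hz, hdist⟩
    by_cases hi : y i = z i
    · rw [hammingDist_add_single_of_eq hi, Nat.add_eq_right, hammingDist_eq_zero] at hdist
      exact absurd (hdist ▸ hz) hy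
    · exact ⟨z, mem_filter.2 ⟨hz, by rw [← hammingDist_add_single_of_ne hi, hdist]⟩, hi⟩
  · rintro ⟨z, hz, hi⟩
    have := hammingDist_add_single_of_ne hi
    have := (mem_filter.1 hz).2
    exact ⟨z, (mem_filter.1 hz).1, by omega⟩

lemma pairwiseDisjoint_filter_ne (hB : ∀ z ∈ B, Even (hammingNorm z))
    (hfree : (B : Set (ι → ZMod 2)).Pairwise fun z w => hammingDist z w ≠ 2)
    (y : ι → ZMod 2) :
    ((B.filter fun z => hammingDist y z = 2 : Finset _) : Set (ι → ZMod 2)).PairwiseDisjoint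
      fun z => univ.filter fun j => y j ≠ z j := by
  intro z hz w hw hzw
  obtain ⟨hzB, hz₂⟩ := mem_filter.1 hz
  obtain ⟨hwB, hw₂⟩ := mem_filter.1 hw
  refine disjoint_left.2 fun j hjz hjw => hfree hzB hwB hzw ?_
  have hz₁ := hammingDist_add_single_of_ne (mem_filter.1 hjz).2
  have hw₁ := hammingDist_add_single_of_ne (mem_filter.1 hjw).2
  exact hammingDist_eq_two_of_hammingDist_eq_one (x := y + Pi.single j 1) (hB z hzB)
    (hB w hwB) hzw (by omega) (by omega)

lemma forall_exists_hammingDist_add_single_eq_one_iff (hB : ∀ z ∈ B, Even (hammingNorm z))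
    (hfree : (B : Set (ι → ZMod 2)).Pairwise fun z w => hammingDist z w ≠ 2)
    {y : ι → ZMod 2} (hy : y ∉ B) :
    (∀ i, ∃ z ∈ B, hammingDist (y + Pi.single i 1) z = 1) ↔
      2 * #(B.filter fun z => hammingDist y z = 2) = Fintype.card ι := by
  set N := B.filter fun z => hammingDist y z = 2
  have hcard : #(N.biUnion fun z => univ.filter fun j => y j ≠ z j) = 2 * #N := by
    rw [card_biUnion (pairwiseDisjoint_filter_ne hB hfree y), mul_comm, ← smul_eq_mul,
      ← sum_const]
    exact sum_congr rfl fun z hz => (mem_filter.1 hz).2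
  simp only [exists_hammingDist_add_single_eq_one_iff hy, ← hcard, N, card_eq_iff_eq_univ,
    eq_univ_iff_forall, mem_biUnion, mem_filter, mem_univ, true_and]

lemma two_mul_card_filter_hammingDist_eq_two (hB : ∀ z ∈ B, Even (hammingNorm z))
    (hfree : (B : Set (ι → ZMod 2)).Pairwise fun z w => hammingDist z w ≠ 2)
    (hle : ∀ x : ι → ZMod 2, Odd (hammingNorm x) →
      #(A.filter fun w => hammingDist x w = 1) ≤ #(B.filter fun w => hammingDist x w = 1))
    {y : ι → ZMod 2} (hyA : y ∈ A) (hy : Even (hammingNorm y)) (hyB : y ∉ B) :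
    2 * #(B.filter fun z => hammingDist y z = 2) = Fintype.card ι := by
  refine (forall_exists_hammingDist_add_single_eq_one_iff hB hfree hyB).1 fun i => ?_
  have hpos : 0 < #(A.filter fun w => hammingDist (y + Pi.single i 1) w = 1) :=
    card_pos.2 ⟨y, mem_filter.2 ⟨hyA, hammingDist_add_single_self y i⟩⟩
  obtain ⟨z, hz⟩ := card_pos.1 (hpos.trans_le (hle _ (odd_hammingNorm_add_single hy i)))
  exact ⟨z, mem_filter.1 hz⟩

lemma filter_hammingDist_eq_one_nonempty (hB : ∀ z ∈ B, Even (hammingNorm z))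
    (hfree : (B : Set (ι → ZMod 2)).Pairwise fun z w => hammingDist z w ≠ 2)
    (hAB : Disjoint A B)
    (hreg : ∀ y ∈ A, 2 * #(B.filter fun z => hammingDist y z = 2) = Fintype.card ι)
    {x : ι → ZMod 2} (hx : (A.filter fun y => hammingDist x y = 1).Nonempty) :
    (B.filter fun z => hammingDist x z = 1).Nonempty := by
  obtain ⟨y, hy⟩ := hx
  obtain ⟨hyA, hxy⟩ := mem_filter.1 hy
  obtain ⟨i, rfl⟩ := eq_add_single_of_hammingDist_eq_one hxy
  obtain ⟨z, hz⟩ := (forall_exists_hammingDist_add_single_eq_one_iff hB hfree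
    (disjoint_left.1 hAB hyA)).2 (hreg _ hyA) i
  exact ⟨z, mem_filter.2 hz⟩

end

theorem stmt_8_general (n : ℕ) (hne : Even n)
    (T₀ T₁ : Finset (Fin n → ZMod 2))
    (h0 : T₀.Nonempty) (h1 : T₁.Nonempty) (hd : Disjoint T₀ T₁)
    (hev : ∀ x ∈ T₀ ∪ T₁, Even (hammingNorm x)) :
    IsExtTrade T₀ T₁ ↔
      ((∀ x ∈ T₀, ∀ y ∈ T₀, x ≠ y → hammingDist x y ≠ 2) ∧
       (∀ x ∈ T₁, ∀ y ∈ T₁, x ≠ y → hammingDist x y ≠ 2) ∧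
       (∀ x ∈ T₀, (T₁.filter fun y => hammingDist x y = 2).card = n / 2) ∧
       (∀ x ∈ T₁, (T₀.filter fun y => hammingDist x y = 2).card = n / 2)) := by
  have hev₀ : ∀ x ∈ T₀, Even (hammingNorm x) := fun x hx => hev x (mem_union_left _ hx)
  have hev₁ : ∀ x ∈ T₁, Even (hammingNorm x) := fun x hx => hev x (mem_union_right _ hx)
  obtain ⟨k, rfl⟩ := hne
  constructor
  · rintro ⟨-, -, -, -, htr⟩
    have hfree₀ := pairwise_hammingDist_ne_two hev₀ fun x hx => (htr x hx).2
    have hfree₁ := pairwise_hammingDist_ne_two hev₁ fun x hx => (htr x hx).1 ▸ (htr x hx).2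
    refine ⟨hfree₀, hfree₁, fun y hy => ?_, fun y hy => ?_⟩
    · have := two_mul_card_filter_hammingDist_eq_two hev₁ hfree₁ (fun x hx => (htr x hx).1.le)
        hy (hev₀ y hy) (disjoint_left.1 hd hy)
      rw [Fintype.card_fin] at this
      omega
    · have := two_mul_card_filter_hammingDist_eq_two hev₀ hfree₀ (fun x hx => (htr x hx).1.ge)
        hy (hev₁ y hy) (disjoint_right.1 hd hy)
      rw [Fintype.card_fin] at this
      omega
  · rintro ⟨hfree₀, hfree₁, hreg₀, hreg₁⟩
    refine ⟨h0, h1, hd, hev, fun x _ => ?_⟩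
    have hle₀ := card_filter_hammingDist_eq_one_le_one hev₀ hfree₀ x
    have hle₁ := card_filter_hammingDist_eq_one_le_one hev₁ hfree₁ x
    have h₀₁ := filter_hammingDist_eq_one_nonempty (x := x) hev₁ hfree₁ hd fun y hy => by
      rw [hreg₀ y hy, Fintype.card_fin]; omega
    have h₁₀ := filter_hammingDist_eq_one_nonempty (x := x) hev₀ hfree₀ hd.symm fun y hy => by
      rw [hreg₁ y hy, Fintype.card_fin]; omega
    rw [← card_pos, ← card_pos] at h₀₁ h₁₀
    exact ⟨by omega, hle₀⟩

/-- a pair of disjoint nonempty sets of even-weight words is an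
extended 1-perfect trade iff the subgraph of the halved n-cube induced by
T₀ ∪ T₁ is bipartite with parts T₀, T₁ and regular of degree n/2. -/
theorem stmt_8 (n : ℕ) (hn : 0 < n) (hne : Even n)
    (T₀ T₁ : Finset (Fin n → ZMod 2))
    (h0 : T₀.Nonempty) (h1 : T₁.Nonempty) (hd : Disjoint T₀ T₁)
    (hev : ∀ x ∈ T₀ ∪ T₁, Even (hammingNorm x)) :
    IsExtTrade T₀ T₁ ↔
      ((∀ x ∈ T₀, ∀ y ∈ T₀, x ≠ y → hammingDist x y ≠ 2) ∧
       (∀ x ∈ T₁, ∀ y ∈ T₁, x ≠ y → hammingDist x y ≠ 2) ∧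
       (∀ x ∈ T₀, (T₁.filter fun y => hammingDist x y = 2).card = n / 2) ∧
       (∀ x ∈ T₁, (T₀.filter fun y => hammingDist x y = 2).card = n / 2)) :=
  stmt_8_general n hne T₀ T₁ h0 h1 hd hev
end

section
/- Every extended 1-perfect trade (T_0, T_1) of length 4 has volume 2, that is, |T_0| = |T_1| = 2. -/
namespace Stmt13Aux

abbrev W := Fin 4 → ZMod 2

def O : Finset W := Finset.univ.filter fun x => Odd (hammingNorm x)

def SphereP (y : W) : Prop := Even (hammingNorm y) →
    (O.filter fun x => hammingDist x y = 1).card = 4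

noncomputable instance (y : W) : Decidable (SphereP y) := by unfold SphereP O; infer_instance

lemma sphere_card : ∀ y : W, SphereP y := by decide

lemma odd_card : O.card = 8 := by decide

def SepP (y z : W) : Prop := Even (hammingNorm y) → Even (hammingNorm z) → y ≠ z →
    ∃ x : W, Odd (hammingNorm x) ∧ hammingDist x y = 1 ∧ hammingDist x z ≠ 1

noncomputable instance (y z : W) : Decidable (SepP y z) := by unfold SepP; infer_instance

lemma separate : ∀ y z : W, SepP y z := by decide

lemma count (T : Finset W) (hT : ∀ y ∈ T, Even (hammingNorm y)) :
    ∑ x ∈ O, (T.filter fun y => hammingDist x y = 1).card = 4 * T.card := by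
  have : ∀ x ∈ O, (T.filter fun y => hammingDist x y = 1).card
      = ∑ y ∈ T, if hammingDist x y = 1 then 1 else 0 := by
    intro x _; rw [Finset.card_filter]
  rw [Finset.sum_congr rfl this, Finset.sum_comm]
  have : ∀ y ∈ T, (∑ x ∈ O, if hammingDist x y = 1 then 1 else 0) = 4 := by
    intro y hy
    rw [← Finset.card_filter]
    exact sphere_card y (hT y hy)
  rw [Finset.sum_congr rfl this, Finset.sum_const, smul_eq_mul, mul_comm]

end Stmt13Aux

open Stmt13Aux in
/-- every extended 1-perfect trade of length 4 has volume 2. -/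
theorem stmt_13 (T₀ T₁ : Finset (Fin 4 → ZMod 2)) (hT : IsExtTrade T₀ T₁) :
    T₀.card = 2 ∧ T₁.card = 2 := by
  obtain ⟨h0, h1, hdisj, heven, hodd⟩ := hT
  have he0 : ∀ y ∈ T₀, Even (hammingNorm y) := fun y hy =>
    heven y (Finset.mem_union_left _ hy)
  have he1 : ∀ y ∈ T₁, Even (hammingNorm y) := fun y hy =>
    heven y (Finset.mem_union_right _ hy)
  have hmemO : ∀ x : W, x ∈ O ↔ Odd (hammingNorm x) := by
    intro x; simp [O]
  have hsum : ∑ x ∈ O, (T₀.filter fun y => hammingDist x y = 1).card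
      = ∑ x ∈ O, (T₁.filter fun y => hammingDist x y = 1).card := by
    refine Finset.sum_congr rfl fun x hx => ?_
    exact (hodd x ((hmemO x).1 hx)).1
  have hc0 := count T₀ he0
  have hc1 := count T₁ he1
  have hcard_eq : T₀.card = T₁.card := by
    have : 4 * T₀.card = 4 * T₁.card := by rw [← hc0, ← hc1, hsum]
    omega
  have hle : ∑ x ∈ O, (T₀.filter fun y => hammingDist x y = 1).card ≤ 8 := by
    calc ∑ x ∈ O, (T₀.filter fun y => hammingDist x y = 1).card
        ≤ ∑ _x ∈ O, 1 := Finset.sum_le_sum fun x hx => (hodd x ((hmemO x).1 hx)).2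
      _ = 8 := by rw [Finset.sum_const, smul_eq_mul, mul_one, odd_card]
  have hle2 : T₀.card ≤ 2 := by rw [hc0] at hle; omega
  have hge1 : 1 ≤ T₀.card := Finset.card_pos.2 h0
  have hne1 : T₀.card ≠ 1 := by
    intro h1'
    obtain ⟨y, hy⟩ := Finset.card_eq_one.1 h1'
    obtain ⟨z, hz⟩ := Finset.card_eq_one.1 (hcard_eq ▸ h1')
    have hyz : y ≠ z := by
      intro h
      have : y ∈ T₀ ∩ T₁ := by
        rw [hy, hz, ← h]; simp
      rw [Finset.disjoint_iff_inter_eq_empty.1 hdisj] at this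
      exact absurd this (Finset.notMem_empty y)
    have hye : Even (hammingNorm y) := he0 y (by rw [hy]; simp)
    have hze : Even (hammingNorm z) := he1 z (by rw [hz]; simp)
    obtain ⟨x, hxodd, hxy, hxz⟩ := separate y z hye hze hyz
    have := (hodd x hxodd).1
    rw [hy, hz, Finset.filter_singleton, Finset.filter_singleton] at this
    simp [hxy, hxz] at this
  exact ⟨by omega, by omega⟩
end

section
/- Let m, q be positive integers, let (M_0, M_1) be a latin trade in H(m, q), and let q_0, …, q_{m−1} ≤ q be such that for every i and every word b ∈ M_0 ∪ M_1, the i-th symbol of b is less than q_i. For each i, let (T^{(i)}_0, …, T^{(i)}_{q_i−1}) be an extended 1-perfect q_i-way trade of length n_i. Identify binary words of length n_0 + … + n_{m−1} with m-tuples (c_0, …, c_{m−1}) where c_i is a binary word of length n_i, and for j = 0, 1 define T_j = {(c_0, …, c_{m−1}) : there exists b ∈ M_j such that c_i ∈ T^{(i)}_{b_i} for all i}. Then (T_0, T_1) is an extended 1-perfect trade of length n_0 + … + n_{m−1}. -/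
lemma card_filter_sigma {m : ℕ} {n : Fin m → ℕ} (p : (Σ i : Fin m, Fin (n i)) → Prop) [DecidablePred p] :
    (Finset.univ.filter p).card = ∑ i : Fin m, (Finset.univ.filter fun t => p ⟨i, t⟩).card := by
  rw [← Finset.univ_sigma_univ, ← Finset.card_sigma]
  congr 1
  ext ⟨i, t⟩
  simp [Finset.mem_sigma]

lemma hammingDist_sigma {m : ℕ} {n : Fin m → ℕ} (x y : (Σ i : Fin m, Fin (n i)) → ZMod 2) :
    hammingDist x y = ∑ i : Fin m, hammingDist (fun t => x ⟨i, t⟩) (fun t => y ⟨i, t⟩) := by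
  classical
  simpa [hammingDist] using card_filter_sigma (fun a => x a ≠ y a)

lemma hammingNorm_sigma {m : ℕ} {n : Fin m → ℕ} (x : (Σ i : Fin m, Fin (n i)) → ZMod 2) :
    hammingNorm x = ∑ i : Fin m, hammingNorm (fun t => x ⟨i, t⟩) := by
  classical
  simpa [hammingNorm] using card_filter_sigma (fun a => x a ≠ 0)



/-- An extended 1-perfect trade on binary words indexed by a finite type `ι`
(for `ι = Fin n`, this is an extended 1-perfect trade of length `n`). -/
def IsExtTradeG {ι : Type} [Fintype ι] (T₀ T₁ : Finset (ι → ZMod 2)) : Prop :=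
  T₀.Nonempty ∧ T₁.Nonempty ∧ Disjoint T₀ T₁ ∧
  (∀ x ∈ T₀ ∪ T₁, Even (hammingNorm x)) ∧
  ∀ x : ι → ZMod 2, Odd (hammingNorm x) →
    (T₀.filter fun y => hammingDist x y = 1).card =
      (T₁.filter fun y => hammingDist x y = 1).card ∧
    (T₀.filter fun y => hammingDist x y = 1).card ≤ 1

/-- A latin trade in H(m,q): a pair of disjoint nonempty sets of words of length
m over an alphabet of size q such that every line (maximum clique of H(m,q))
contains equally many (0 or 1) elements of each set. -/
def IsLatinTrade (m q : ℕ) (M₀ M₁ : Finset (Fin m → Fin q)) : Prop :=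
  M₀.Nonempty ∧ M₁.Nonempty ∧ Disjoint M₀ M₁ ∧
  ∀ (i : Fin m) (u : Fin m → Fin q),
    (M₀.filter fun w => ∀ j, j ≠ i → w j = u j).card =
      (M₁.filter fun w => ∀ j, j ≠ i → w j = u j).card ∧
    (M₀.filter fun w => ∀ j, j ≠ i → w j = u j).card ≤ 1

/-- concatenation construction of extended 1-perfect trades from a
latin trade and extended 1-perfect `qᵢ`-way trades. Binary words of length
n₀ + … + n_{m-1} are identified with words indexed by `Σ i : Fin m, Fin (n i)`,
i.e., with m-tuples (c₀, …, c_{m-1}) where cᵢ is a binary word of length nᵢ. -/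
theorem stmt_17 (m q : ℕ) (hm : 0 < m) (hq : 0 < q)
    (M₀ M₁ : Finset (Fin m → Fin q)) (hM : IsLatinTrade m q M₀ M₁)
    (qi : Fin m → ℕ) (hqi : ∀ i, qi i ≤ q)
    (hbound : ∀ b ∈ M₀ ∪ M₁, ∀ i, (b i : ℕ) < qi i)
    (n : Fin m → ℕ)
    (T : (i : Fin m) → Fin q → Finset (Fin (n i) → ZMod 2))
    -- each (T i 0, …, T i (qi i - 1)) is an extended 1-perfect (qi i)-way trade:
    (hTnonempty : ∀ i, ∀ j : Fin q, (j : ℕ) < qi i → (T i j).Nonempty)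
    (hTeven : ∀ i, ∀ j : Fin q, (j : ℕ) < qi i → ∀ x ∈ T i j, Even (hammingNorm x))
    (hTpair : ∀ i, ∀ j j' : Fin q, (j : ℕ) < qi i → (j' : ℕ) < qi i → j ≠ j' →
      IsExtTradeG (T i j) (T i j'))
    (T₀ T₁ : Finset ((Σ i : Fin m, Fin (n i)) → ZMod 2))
    (hT₀ : ∀ c, c ∈ T₀ ↔ ∃ b ∈ M₀, ∀ i, (fun k => c ⟨i, k⟩) ∈ T i (b i))
    (hT₁ : ∀ c, c ∈ T₁ ↔ ∃ b ∈ M₁, ∀ i, (fun k => c ⟨i, k⟩) ∈ T i (b i)) :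
    IsExtTradeG T₀ T₁ := by
  
  classical
  obtain ⟨hM₀ne, hM₁ne, hMdisj, hMline⟩ := hM
  have hbound₀ : ∀ b ∈ M₀, ∀ i, (b i : ℕ) < qi i :=
    fun b hb => hbound b (Finset.mem_union_left _ hb)
  have hbound₁ : ∀ b ∈ M₁, ∀ i, (b i : ℕ) < qi i :=
    fun b hb => hbound b (Finset.mem_union_right _ hb)
  have hTuniq : ∀ (i : Fin m) (j j' : Fin q), (j : ℕ) < qi i → (j' : ℕ) < qi i →
      ∀ z, z ∈ T i j → z ∈ T i j' → j = j' := by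
    intro i j j' hj hj' z hz hz'
    by_contra hne
    exact (Finset.disjoint_left.mp (hTpair i j j' hj hj' hne).2.2.1 hz) hz'
  have hne : ∀ (M : Finset (Fin m → Fin q)) (Ts : Finset ((Σ i : Fin m, Fin (n i)) → ZMod 2)),
      (∀ c, c ∈ Ts ↔ ∃ b ∈ M, ∀ i, (fun k => c ⟨i, k⟩) ∈ T i (b i)) →
      (∀ b ∈ M, ∀ i, (b i : ℕ) < qi i) → M.Nonempty → Ts.Nonempty := by
    rintro M Ts hTs hbd ⟨b, hb⟩
    choose c hc using fun i => hTnonempty i (b i) (hbd b hb i)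
    exact ⟨fun a => c a.1 a.2, (hTs _).mpr ⟨b, hb, fun i => hc i⟩⟩
  have hdisj : Disjoint T₀ T₁ := by
    rw [Finset.disjoint_left]
    intro c hc0 hc1
    obtain ⟨b, hb, hbc⟩ := (hT₀ c).mp hc0
    obtain ⟨b', hb', hbc'⟩ := (hT₁ c).mp hc1
    have hbb : b = b' := funext fun i =>
      hTuniq i (b i) (b' i) (hbound₀ b hb i) (hbound₁ b' hb' i) _ (hbc i) (hbc' i)
    exact Finset.disjoint_left.mp hMdisj hb (hbb ▸ hb')
  have hwit : ∀ y ∈ T₀ ∪ T₁, ∃ b ∈ M₀ ∪ M₁, ∀ i, (fun k => y ⟨i, k⟩) ∈ T i (b i) := by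
    intro y hy
    rcases Finset.mem_union.mp hy with h | h
    · obtain ⟨b, hb, hbc⟩ := (hT₀ y).mp h; exact ⟨b, Finset.mem_union_left _ hb, hbc⟩
    · obtain ⟨b, hb, hbc⟩ := (hT₁ y).mp h; exact ⟨b, Finset.mem_union_right _ hb, hbc⟩
  have heven : ∀ x ∈ T₀ ∪ T₁, Even (hammingNorm x) := by
    intro c hc
    obtain ⟨b, hb, hbc⟩ := hwit c hc
    rw [hammingNorm_sigma]
    exact Finset.even_sum _ fun i _ => hTeven i (b i) (hbound b hb i) _ (hbc i)
  refine ⟨hne M₀ T₀ hT₀ hbound₀ hM₀ne, hne M₁ T₁ hT₁ hbound₁ hM₁ne, hdisj, heven, ?_⟩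
  intro x hx
  obtain ⟨istar, hodd⟩ : ∃ istar, Odd (hammingNorm (fun t => x ⟨istar, t⟩)) := by
    by_contra h
    push_neg at h
    simp only [Nat.not_odd_iff_even] at h
    rw [hammingNorm_sigma] at hx
    exact (Nat.not_odd_iff_even.mpr (Finset.even_sum _ fun i _ => h i)) hx
  have hsplit : ∀ y ∈ T₀ ∪ T₁, hammingDist x y = 1 →
      (∀ j, j ≠ istar → (fun t => y ⟨j, t⟩) = (fun t => x ⟨j, t⟩)) ∧
      hammingDist (fun t => x ⟨istar, t⟩) (fun t => y ⟨istar, t⟩) = 1 := by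
    intro y hy hd
    obtain ⟨b, hb, hbc⟩ := hwit y hy
    have hyeven : ∀ j, Even (hammingNorm (fun t => y ⟨j, t⟩)) :=
      fun j => hTeven j (b j) (hbound b hb j) _ (hbc j)
    rw [hammingDist_sigma] at hd
    have hzero : ∀ j, j ≠ istar → hammingDist (fun t => x ⟨j, t⟩) (fun t => y ⟨j, t⟩) = 0 := by
      intro j hj
      by_contra h0
      have h1 : 1 ≤ hammingDist (fun t => x ⟨j, t⟩) (fun t => y ⟨j, t⟩) :=
        Nat.one_le_iff_ne_zero.mpr h0
      have hpair := Finset.sum_le_sum_of_subset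
        (f := fun i => hammingDist (fun t => x ⟨i, t⟩) fun t => y ⟨i, t⟩)
        (Finset.subset_univ ({istar, j} : Finset (Fin m)))
      rw [Finset.sum_pair (Ne.symm hj)] at hpair
      beta_reduce at hpair
      have h2 : hammingDist (fun t => x ⟨istar, t⟩) (fun t => y ⟨istar, t⟩) = 0 := by omega
      have heq := hammingDist_eq_zero.mp h2
      exact (Nat.not_odd_iff_even.mpr (hyeven istar)) (heq ▸ hodd)
    refine ⟨fun j hj => (hammingDist_eq_zero.mp (hzero j hj)).symm, ?_⟩
    rwa [Finset.sum_eq_single_of_mem istar (Finset.mem_univ _)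
      (fun j _ hj => hzero j hj)] at hd
  by_cases hB : ∀ j, j ≠ istar → ∃ k : Fin q, (k : ℕ) < qi j ∧ (fun t => x ⟨j, t⟩) ∈ T j k
  · -- main case
    choose u hu1 hu2 using hB
    set U : Fin m → Fin q := fun j => if h : j = istar then ⟨0, hq⟩ else u j h with hU
    have hUmem : ∀ j, (hj : j ≠ istar) → (fun t => x ⟨j, t⟩) ∈ T j (U j) := by
      intro j hj
      simp only [hU, dif_neg hj]
      exact hu2 j hj
    have hUlt : ∀ j, (hj : j ≠ istar) → (U j : ℕ) < qi j := by
      intro j hj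
      simp only [hU, dif_neg hj]
      exact hu1 j hj
    obtain ⟨hcardeq, hcard0⟩ := hMline istar U
    have hcard1 : (M₁.filter fun w => ∀ j, j ≠ istar → w j = U j).card ≤ 1 :=
      hcardeq ▸ hcard0
    have hwitline : ∀ (M : Finset (Fin m → Fin q)) (Ts : Finset ((Σ i : Fin m, Fin (n i)) → ZMod 2)),
        (∀ c, c ∈ Ts ↔ ∃ b ∈ M, ∀ i, (fun k => c ⟨i, k⟩) ∈ T i (b i)) →
        (∀ b ∈ M, ∀ i, (b i : ℕ) < qi i) → Ts ⊆ T₀ ∪ T₁ →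
        ∀ y ∈ Ts, hammingDist x y = 1 →
        ∃ b ∈ M.filter (fun w => ∀ j, j ≠ istar → w j = U j),
          (fun t => y ⟨istar, t⟩) ∈ T istar (b istar) := by
      intro M Ts hTs hbd hsub y hy hd
      obtain ⟨b, hb, hbc⟩ := (hTs y).mp hy
      obtain ⟨hagree, _⟩ := hsplit y (hsub hy) hd
      refine ⟨b, Finset.mem_filter.mpr ⟨hb, fun j hj => ?_⟩, hbc istar⟩
      exact hTuniq j (b j) (U j) (hbd b hb j) (hUlt j hj) _
        ((hagree j hj) ▸ hbc j) (hUmem j hj)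
    have hcount : ∀ (M : Finset (Fin m → Fin q)) (Ts : Finset ((Σ i : Fin m, Fin (n i)) → ZMod 2)),
        (∀ c, c ∈ Ts ↔ ∃ b ∈ M, ∀ i, (fun k => c ⟨i, k⟩) ∈ T i (b i)) →
        (∀ b ∈ M, ∀ i, (b i : ℕ) < qi i) → Ts ⊆ T₀ ∪ T₁ →
        (M.filter (fun w => ∀ j, j ≠ istar → w j = U j)).card ≤ 1 →
        ∀ b ∈ M.filter (fun w => ∀ j, j ≠ istar → w j = U j),
        (Ts.filter fun y => hammingDist x y = 1).card
          = ((T istar (b istar)).filter fun z =>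
              hammingDist (fun t => x ⟨istar, t⟩) z = 1).card := by
      intro M Ts hTs hbd hsub hle b hbfil
      obtain ⟨hbM, hbline⟩ := Finset.mem_filter.mp hbfil
      apply Finset.card_bij (fun y _ => fun t => y ⟨istar, t⟩)
      · intro y hy
        obtain ⟨hyTs, hyd⟩ := Finset.mem_filter.mp hy
        obtain ⟨b', hb'fil, hb'mem⟩ := hwitline M Ts hTs hbd hsub y hyTs hyd
        have hbb : b' = b := Finset.card_le_one.mp hle _ hb'fil _ hbfil
        exact Finset.mem_filter.mpr ⟨hbb ▸ hb'mem, (hsplit y (hsub hyTs) hyd).2⟩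
      · intro y hy y' hy' heq
        obtain ⟨hyTs, hyd⟩ := Finset.mem_filter.mp hy
        obtain ⟨hy'Ts, hy'd⟩ := Finset.mem_filter.mp hy'
        have h1 := (hsplit y (hsub hyTs) hyd).1
        have h1' := (hsplit y' (hsub hy'Ts) hy'd).1
        funext a
        obtain ⟨j, t⟩ := a
        by_cases hj : j = istar
        · subst hj; exact congrFun heq t
        · exact congrFun ((h1 j hj).trans (h1' j hj).symm) t
      · intro z hz
        obtain ⟨hzT, hzd⟩ := Finset.mem_filter.mp hz
        set y : (Σ i : Fin m, Fin (n i)) → ZMod 2 :=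
          fun a => if h : a.1 = istar then z ⟨a.2.1, h ▸ a.2.2⟩ else x a with hy
        have hystar : (fun t => y ⟨istar, t⟩) = z := by
          funext t
          show dite _ _ _ = z t
          rw [dif_pos rfl]
        have hyoff : ∀ j, j ≠ istar → (fun t => y ⟨j, t⟩) = (fun t => x ⟨j, t⟩) := by
          intro j hj
          funext t
          show dite _ _ _ = x ⟨j, t⟩
          rw [dif_neg hj]
        have hyTs : y ∈ Ts := by
          refine (hTs y).mpr ⟨b, hbM, fun i => ?_⟩
          by_cases hi : i = istar
          · subst hi; rw [hystar]; exact hzT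
          · rw [hyoff i hi, hbline i hi]; exact hUmem i hi
        have hyd : hammingDist x y = 1 := by
          rw [hammingDist_sigma,
            Finset.sum_eq_single_of_mem istar (Finset.mem_univ _)
              (fun j _ hj => hammingDist_eq_zero.mpr (hyoff j hj).symm)]
          rw [hystar]
          exact hzd
        exact ⟨y, Finset.mem_filter.mpr ⟨hyTs, hyd⟩, hystar⟩
    rcases Nat.eq_zero_or_pos (M₀.filter fun w => ∀ j, j ≠ istar → w j = U j).card with h0 | hpos
    · have e₀ : (T₀.filter fun y => hammingDist x y = 1) = ∅ := by
        rw [Finset.filter_eq_empty_iff]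
        intro y hy hd
        obtain ⟨b, hbfil, -⟩ := hwitline M₀ T₀ hT₀ hbound₀ Finset.subset_union_left y hy hd
        rw [Finset.card_eq_zero.mp h0] at hbfil
        exact absurd hbfil (Finset.notMem_empty _)
      have e₁ : (T₁.filter fun y => hammingDist x y = 1) = ∅ := by
        rw [Finset.filter_eq_empty_iff]
        intro y hy hd
        obtain ⟨b, hbfil, -⟩ := hwitline M₁ T₁ hT₁ hbound₁ Finset.subset_union_right y hy hd
        have h0' : (M₁.filter fun w => ∀ j, j ≠ istar → w j = U j).card = 0 := by
          rw [← hcardeq]; exact h0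
        rw [Finset.card_eq_zero.mp h0'] at hbfil
        exact absurd hbfil (Finset.notMem_empty _)
      rw [e₀, e₁]
      simp
    · obtain ⟨b₀, hb₀⟩ := Finset.card_pos.mp hpos
      obtain ⟨b₁, hb₁⟩ := Finset.card_pos.mp (by rw [← hcardeq]; exact hpos)
      have hN₀ := hcount M₀ T₀ hT₀ hbound₀ Finset.subset_union_left hcard0 b₀ hb₀
      have hN₁ := hcount M₁ T₁ hT₁ hbound₁ Finset.subset_union_right hcard1 b₁ hb₁
      have hb₀M := (Finset.mem_filter.mp hb₀).1
      have hb₁M := (Finset.mem_filter.mp hb₁).1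
      have hbne : b₀ istar ≠ b₁ istar := by
        intro hcontra
        have : b₀ = b₁ := by
          funext j
          by_cases hj : j = istar
          · subst hj; exact hcontra
          · rw [(Finset.mem_filter.mp hb₀).2 j hj, (Finset.mem_filter.mp hb₁).2 j hj]
        exact Finset.disjoint_left.mp hMdisj hb₀M (this ▸ hb₁M)
      obtain ⟨heq, hle⟩ := (hTpair istar (b₀ istar) (b₁ istar)
        (hbound₀ b₀ hb₀M istar) (hbound₁ b₁ hb₁M istar) hbne).2.2.2.2
        (fun t => x ⟨istar, t⟩) hodd
      constructor
      · rw [hN₀, hN₁, heq]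
      · rw [hN₀]; exact hle
  · push_neg at hB
    obtain ⟨j₀, hj₀, hk⟩ := hB
    have hempty : ∀ (M : Finset (Fin m → Fin q)) (Ts : Finset ((Σ i : Fin m, Fin (n i)) → ZMod 2)),
        (∀ c, c ∈ Ts ↔ ∃ b ∈ M, ∀ i, (fun k => c ⟨i, k⟩) ∈ T i (b i)) →
        (∀ b ∈ M, ∀ i, (b i : ℕ) < qi i) → Ts ⊆ T₀ ∪ T₁ →
        Ts.filter (fun y => hammingDist x y = 1) = ∅ := by
      intro M Ts hTs hbd hsub
      rw [Finset.filter_eq_empty_iff]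
      intro y hy hd
      obtain ⟨b, hb, hbc⟩ := (hTs y).mp hy
      have hag := (hsplit y (hsub hy) hd).1 j₀ hj₀
      exact hk (b j₀) (hbd b hb j₀) (hag ▸ hbc j₀)
    rw [hempty M₀ T₀ hT₀ hbound₀ Finset.subset_union_left,
      hempty M₁ T₁ hT₁ hbound₁ Finset.subset_union_right]
    simp
end
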